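/- Let Q* : S×A → ℝ, let π* be a policy greedy with respect to Q*, and set Π* := Π^{π*}. Let (Q_k)_{k≥0} and (Q^U_k)_{k≥0} be sequences in ℝ^{S×A} and (w_k)_{k≥0} arbitrary vectors in ℝ^{S×A}; for each k let π_k be a policy greedy with respect to Q_k, and set Π_k := Π^{π_k}, A_k := I + α(γ D P Π_k − D). Suppose that for all k ≥ 0: Q_{k+1} − Q* = A_k(Q_k − Q*) + αγ D P(Π_k − Π*)Q* + α w_k and Q^U_{k+1} − Q* = A_k(Q^U_k − Q*) + α w_k. If Q^U_0 − Q* ≥ Q_0 − Q* componentwise, then Q^U_k − Q* ≥ Q_k − Q* componentwise for all k ≥ 0. -/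
import Mathlib


open Matrix

/-- The policy matrix `Π^π ∈ ℝ^{S × (S×A)}` of a deterministic policy `π : S → A`:
`Π^π(s, (s', a)) = 1` if `s' = s` and `a = π s`, else `0`. -/
def policyMatrix {S A : Type*} [DecidableEq S] [DecidableEq A] (π : S → A) :
    Matrix S (S × A) ℝ :=
  Matrix.of fun s p => if p.1 = s ∧ p.2 = π s then (1 : ℝ) else 0

/-- A deterministic policy `π` is greedy with respect to `Q : S × A → ℝ` if
`Q(s, π s) = max_{a} Q(s, a)` for every state `s`. -/
def IsGreedy {S A : Type*} [Fintype A] [Nonempty A] (π : S → A) (Q : S × A → ℝ) : Prop :=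
  ∀ s, Q (s, π s) = ⨆ a : A, Q (s, a)


lemma mulVec_mono' {I : Type*} [Fintype I] (M : Matrix I I ℝ)
    (hM : ∀ p q, 0 ≤ M p q) {x y : I → ℝ} (h : x ≤ y) : M.mulVec x ≤ M.mulVec y := by
  intro p
  simp only [Matrix.mulVec, dotProduct]
  exact Finset.sum_le_sum fun q _ => mul_le_mul_of_nonneg_left (h q) (hM p q)

lemma policyMatrix_mulVec' {S A : Type*} [Fintype S] [Fintype A]
    [DecidableEq S] [DecidableEq A] (π : S → A) (Qs : S × A → ℝ) :
    (policyMatrix π).mulVec Qs = fun s => Qs (s, π s) := by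
  funext s
  simp only [Matrix.mulVec, dotProduct, policyMatrix, Matrix.of_apply]
  have : ∀ p : S × A, (p.1 = s ∧ p.2 = π s) ↔ p = (s, π s) := by
    intro p; constructor
    · rintro ⟨h1, h2⟩; exact Prod.ext h1 h2
    · rintro rfl; exact ⟨rfl, rfl⟩
  simp_rw [this]
  simp [Finset.sum_ite_eq']

/-- The upper comparison system bounds the Q-learning iterates from above:
if `Q^U_0 − Q* ≥ Q_0 − Q*` componentwise, then `Q^U_k − Q* ≥ Q_k − Q*` for all `k`. -/
theorem upper_comparison_system_bound
    {S A : Type*} [Fintype S] [Fintype A] [Nonempty S] [Nonempty A]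
    [DecidableEq S] [DecidableEq A]
    (d : S × A → ℝ) (hd : ∀ p, 0 < d p ∧ d p ≤ 1)
    (P : Matrix (S × A) S ℝ) (hP : ∀ p s, 0 ≤ P p s) (hProw : ∀ p, ∑ s, P p s = 1)
    (α γ : ℝ) (hα : 0 < α ∧ α < 1) (hγ : 0 ≤ γ ∧ γ < 1)
    (Qstar : S × A → ℝ) (πstar : S → A) (hπstar : IsGreedy πstar Qstar)
    (Q QU : ℕ → S × A → ℝ) (w : ℕ → S × A → ℝ)
    (π : ℕ → S → A) (hπ : ∀ k, IsGreedy (π k) (Q k))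
    (hQ : ∀ k, Q (k + 1) - Qstar =
      ((1 : Matrix (S × A) (S × A) ℝ) +
        α • (γ • (Matrix.diagonal d * P * policyMatrix (π k)) - Matrix.diagonal d)).mulVec
        (Q k - Qstar)
      + (α * γ) •
          (Matrix.diagonal d * P * (policyMatrix (π k) - policyMatrix πstar)).mulVec Qstar
      + α • w k)
    (hQU : ∀ k, QU (k + 1) - Qstar =
      ((1 : Matrix (S × A) (S × A) ℝ) +
        α • (γ • (Matrix.diagonal d * P * policyMatrix (π k)) - Matrix.diagonal d)).mulVec
        (QU k - Qstar)
      + α • w k)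
    (h0 : Q 0 - Qstar ≤ QU 0 - Qstar) :
    ∀ k, Q k - Qstar ≤ QU k - Qstar := by
  intro k
  induction k with
  | zero => exact h0
  | succ k ih =>
    rw [hQ k, hQU k]
    set D := Matrix.diagonal d with hD
    set Ak := ((1 : Matrix (S × A) (S × A) ℝ) +
        α • (γ • (D * P * policyMatrix (π k)) - D)) with hAk
    -- entries of D*P*Π are nonneg
    have hDP : ∀ p s, 0 ≤ (D * P) p s := by
      intro p s
      rw [hD, Matrix.diagonal_mul]
      exact mul_nonneg (hd p).1.le (hP p s)
    have hPinn : ∀ (ρ : S → A) s p, (0:ℝ) ≤ policyMatrix ρ s p := by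
      intro ρ s p
      simp only [policyMatrix, Matrix.of_apply]
      split <;> norm_num
    have hMnn : ∀ p q, 0 ≤ (D * P * policyMatrix (π k)) p q := by
      intro p q
      rw [Matrix.mul_apply]
      exact Finset.sum_nonneg fun s _ => mul_nonneg (hDP p s) (hPinn _ s q)
    -- A_k has nonneg entries
    have hAnn : ∀ p q, 0 ≤ Ak p q := by
      intro p q
      by_cases hpq : p = q
      · subst hpq
        have hM := hMnn p p
        rw [hD] at hM
        simp only [hAk, hD, Matrix.add_apply, Matrix.smul_apply, Matrix.sub_apply,
          Matrix.one_apply_eq, Matrix.diagonal_apply_eq, smul_eq_mul]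
        nlinarith [(hd p).1, (hd p).2, hα.1, hα.2, hγ.1, mul_nonneg hγ.1 hM]
      · have hM := hMnn p q
        rw [hD] at hM
        simp only [hAk, hD, Matrix.add_apply, Matrix.smul_apply, Matrix.sub_apply,
          Matrix.one_apply_ne hpq, Matrix.diagonal_apply_ne _ hpq, smul_eq_mul]
        nlinarith [mul_nonneg hα.1.le (mul_nonneg hγ.1 hM)]
    -- monotone step
    have hmono := mulVec_mono' Ak hAnn ih
    -- second term nonpositive
    have hterm : (α * γ) •
        (D * P * (policyMatrix (π k) - policyMatrix πstar)).mulVec Qstar ≤ 0 := by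
      have hv : ((policyMatrix (π k) - policyMatrix πstar).mulVec Qstar) ≤ 0 := by
        rw [Matrix.sub_mulVec, policyMatrix_mulVec', policyMatrix_mulVec']
        intro s
        simp only [Pi.sub_apply, Pi.zero_apply, sub_nonpos]
        rw [hπstar s]
        exact le_ciSup (f := fun a => Qstar (s, a)) (Set.Finite.bddAbove (Set.finite_range _)) (π k s)
      have hDPv : (D * P).mulVec ((policyMatrix (π k) - policyMatrix πstar).mulVec Qstar)
          ≤ 0 := by
        intro p
        simp only [Matrix.mulVec, dotProduct, Pi.zero_apply]
        exact Finset.sum_nonpos fun s _ => mul_nonpos_of_nonneg_of_nonpos (hDP p s) (hv s)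
      rw [Matrix.mul_assoc, ← Matrix.mulVec_mulVec] at *
      intro p
      simpa using mul_nonpos_of_nonneg_of_nonpos
        (mul_nonneg hα.1.le hγ.1) (hDPv p)
    intro p
    have h1 := hmono p
    have h2 := hterm p
    simp only [Pi.add_apply, Pi.smul_apply, Pi.zero_apply, smul_eq_mul] at *
    linarith
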